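/- arXiv:quant-ph/0402123 — 4 statements merged into one kernel-verified Lean document; each statement's English description precedes it below -/
import Mathlib

section
/- Let a, b > 0 be reals satisfying the Coppersmith–Rivlin property. Let k, D, N, C be integers with 1 ≤ k ≤ D, C ≥ 1, and k + C < N, let δ ≥ 0 be real, and let p be a real polynomial of degree at most D such that −δ ≤ p(i) ≤ δ for every integer i ∈ {0, …, k−1}, p(k) = σ, and −δ ≤ p(i) ≤ 1 + δ for every integer i ∈ {0, …, N}. Set μ = 2C/(N−k−C). Then σ ≤ a·(1 + δ + δ·(2N)^k/(k−1)!) · exp( b·(D−k)²/(N−k−C) + 2·(D−k)·√(2μ + μ²) − k·ln(C/k) ) + δ·k·2^(k−1). -/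
set_option maxHeartbeats 1000000

open Polynomial Finset

namespace KeyPolyAux

lemma cheb_natDegree_le (n : ℕ) : (Polynomial.Chebyshev.T ℝ (n : ℤ)).natDegree ≤ n := by
  induction n using Nat.strong_induction_on with
  | _ n ih =>
    match n with
    | 0 => simp [Polynomial.Chebyshev.T_zero]
    | 1 => simp [Polynomial.Chebyshev.T_one]
    | (m+2) =>
      have h1 := ih (m+1) (by omega)
      have h0 := ih m (by omega)
      have e : ((m+2 : ℕ) : ℤ) = (m : ℤ) + 2 := by push_cast; ring
      have e1 : ((m:ℤ)+1) = ((m+1:ℕ):ℤ) := by push_cast; ring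
      rw [e, Polynomial.Chebyshev.T_add_two, e1]
      refine (natDegree_sub_le _ _).trans (max_le ?_ ?_)
      · refine natDegree_mul_le.trans ?_
        have h2 : (2 * X : ℝ[X]).natDegree ≤ 1 :=
          natDegree_mul_le.trans (by simp)
        omega
      · omega

lemma cos_nat_pi (j : ℕ) : Real.cos (j * Real.pi) = (-1 : ℝ)^j := by
  induction j with
  | zero => simp
  | succ n ih =>
    have e : ((n+1 : ℕ):ℝ) * Real.pi = n * Real.pi + Real.pi := by push_cast; ring
    rw [e, Real.cos_add_pi, ih]
    ring

lemma eval_lagrange_basis (s : Finset ℕ) (v : ℕ → ℝ) (i : ℕ) (x : ℝ) :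
    (Lagrange.basis s v i).eval x = ∏ j ∈ s.erase i, ((v i - v j)⁻¹ * (x - v j)) := by
  rw [Lagrange.basis, eval_prod]
  exact prod_congr rfl fun j _ => by simp [Lagrange.basisDivisor]

lemma eval_interp (s : Finset ℕ) (v : ℕ → ℝ) (r : ℕ → ℝ) (x : ℝ) :
    (Lagrange.interpolate s v r).eval x
      = ∑ i ∈ s, r i * (Lagrange.basis s v i).eval x := by
  rw [Lagrange.interpolate_apply, eval_finset_sum]
  exact sum_congr rfl fun i _ => by simp

lemma abs_basis_eval (s : Finset ℕ) (v : ℕ → ℝ) (i : ℕ) (x : ℝ) :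
    |(Lagrange.basis s v i).eval x|
      = (∏ j ∈ s.erase i, |x - v j|) * (∏ j ∈ s.erase i, |v i - v j|)⁻¹ := by
  rw [eval_lagrange_basis, Finset.abs_prod, ← Finset.prod_inv_distrib, ← Finset.prod_mul_distrib]
  exact prod_congr rfl fun j _ => by rw [abs_mul, abs_inv, mul_comm]

lemma prod_range_cast_sub_factorial (n : ℕ) :
    ∏ j ∈ range n, ((n : ℝ) - (j:ℝ)) = (n.factorial : ℝ) := by
  have h := Finset.prod_range_reflect (fun j => (n : ℝ) - (j:ℝ)) n
  calc ∏ j ∈ range n, ((n : ℝ) - (j:ℝ))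
      = ∏ j ∈ range n, ((n : ℝ) - ((n - 1 - j : ℕ):ℝ)) := h.symm
    _ = ∏ j ∈ range n, (((j+1 : ℕ)):ℝ) := by
        refine prod_congr rfl fun j hj => ?_
        rw [mem_range] at hj
        have e : (n - 1 - j : ℕ) = n - (j+1) := by omega
        rw [e, Nat.cast_sub (by omega)]
        push_cast; ring
    _ = ((∏ j ∈ range n, (j+1) : ℕ) : ℝ) := by rw [Nat.cast_prod]
    _ = (n.factorial : ℝ) := by rw [Finset.prod_range_add_one_eq_factorial]

lemma prod_Ico_cast (i k : ℕ) (hik : i < k) :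
    ∏ j ∈ Ico (i+1) k, ((j:ℝ) - (i:ℝ)) = ((k-1-i).factorial : ℝ) := by
  rw [Finset.prod_Ico_eq_prod_range]
  calc ∏ t ∈ range (k - (i+1)), (((i+1+t : ℕ):ℝ) - (i:ℝ))
      = ∏ t ∈ range (k - (i+1)), (((t+1 : ℕ)):ℝ) := by
        refine prod_congr rfl fun t ht => ?_
        push_cast; ring
    _ = ((∏ t ∈ range (k - (i+1)), (t+1) : ℕ) : ℝ) := by rw [Nat.cast_prod]
    _ = ((k-1-i).factorial : ℝ) := by
        rw [Finset.prod_range_add_one_eq_factorial, show k - (i+1) = k-1-i by omega]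

lemma erase_range_split (d i : ℕ) (hi : i < d) :
    (range d).erase i = range i ∪ Ico (i+1) d := by
  ext j
  simp only [mem_erase, mem_range, mem_union, mem_Ico]
  omega

lemma erase_range_disj (d i : ℕ) :
    Disjoint (range i) (Ico (i+1) d) := by
  rw [Finset.disjoint_left]
  intro j h1 h2
  rw [mem_range] at h1
  rw [mem_Ico] at h2
  omega

lemma prod_erase_abs_eq (k i : ℕ) (hik : i < k) :
    ∏ j ∈ (range k).erase i, |(i:ℝ) - (j:ℝ)|
      = (i.factorial : ℝ) * ((k - 1 - i).factorial : ℝ) := by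
  rw [erase_range_split k i hik, prod_union (erase_range_disj k i)]
  congr 1
  · calc ∏ j ∈ range i, |(i:ℝ) - (j:ℝ)|
        = ∏ j ∈ range i, ((i:ℝ) - (j:ℝ)) := by
          refine prod_congr rfl fun j hj => ?_
          rw [mem_range] at hj
          have : (j:ℝ) < (i:ℝ) := by exact_mod_cast hj
          rw [abs_of_pos (by linarith)]
      _ = (i.factorial : ℝ) := prod_range_cast_sub_factorial i
  · calc ∏ j ∈ Ico (i+1) k, |(i:ℝ) - (j:ℝ)|
        = ∏ j ∈ Ico (i+1) k, ((j:ℝ) - (i:ℝ)) := by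
          refine prod_congr rfl fun j hj => ?_
          rw [mem_Ico] at hj
          have : (i:ℝ) < (j:ℝ) := by exact_mod_cast hj.1
          rw [abs_sub_comm, abs_of_pos (by linarith)]
      _ = ((k-1-i).factorial : ℝ) := prod_Ico_cast i k hik

lemma choose_le_two_pow {n i : ℕ} (h : i ≤ n) : n.choose i ≤ 2^n := by
  calc n.choose i ≤ ∑ j ∈ range (n+1), n.choose j :=
        Finset.single_le_sum (fun _ _ => Nat.zero_le _) (mem_range.2 (Nat.lt_succ_of_le h))
    _ = 2^n := Nat.sum_range_choose n


lemma cheb_eval_le (d : ℕ) {ε : ℝ} (hε : 0 < ε) :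
    (Polynomial.Chebyshev.T ℝ (d:ℤ)).eval (1+ε)
      ≤ Real.exp (d * Real.sqrt (2*ε + ε^2)) := by
  set u := Real.sqrt (2*ε + ε^2) with hu
  have hu2 : u^2 = 2*ε + ε^2 := Real.sq_sqrt (by nlinarith)
  have hu0 : 0 ≤ u := Real.sqrt_nonneg _
  set w : ℝ := 1 + ε + u with hw
  have hw0 : 0 < w := by nlinarith
  set t : ℝ := Real.log w with htdef
  have ht0 : 0 ≤ t := Real.log_nonneg (by nlinarith)
  have hinv : w⁻¹ = 1 + ε - u := by
    have hmul : w * (1 + ε - u) = 1 := by nlinarith [hu2]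
    field_simp
    nlinarith [hmul]
  have hcosh : Real.cosh t = 1 + ε := by
    rw [Real.cosh_eq, htdef, Real.exp_neg, Real.exp_log hw0, hinv]
    ring
  -- T value = cosh (d t)
  have hyc : ((1+ε : ℝ) : ℂ) = Complex.cos ((t:ℂ) * Complex.I) := by
    rw [Complex.cos_mul_I, ← Complex.ofReal_cosh, hcosh]
  have h1 : (((Polynomial.Chebyshev.T ℝ (d:ℤ)).eval (1+ε) : ℝ) : ℂ)
      = (Polynomial.Chebyshev.T ℂ (d:ℤ)).eval ((1+ε : ℝ):ℂ) :=
    Polynomial.Chebyshev.complex_ofReal_eval_T _ _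
  rw [hyc, Polynomial.Chebyshev.T_complex_cos] at h1
  have h2 : ((d:ℤ):ℂ) * ((t:ℂ) * Complex.I) = ((d*t : ℝ):ℂ) * Complex.I := by
    push_cast; ring
  rw [h2, Complex.cos_mul_I, ← Complex.ofReal_cosh] at h1
  have hTval : (Polynomial.Chebyshev.T ℝ (d:ℤ)).eval (1+ε) = Real.cosh ((d:ℝ)*t) := by
    exact_mod_cast h1
  rw [hTval]
  have hdt0 : 0 ≤ (d:ℝ)*t := by positivity
  have hch : Real.cosh ((d:ℝ)*t) ≤ Real.exp ((d:ℝ)*t) := by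
    rw [Real.cosh_eq]
    have := Real.exp_le_exp.mpr (neg_le_self hdt0)
    linarith
  refine hch.trans (Real.exp_le_exp.mpr ?_)
  have htu : t ≤ u := by
    rw [htdef]
    have hexp : w ≤ Real.exp u := by
      have := Real.quadratic_le_exp_of_nonneg hu0
      nlinarith [hu2]
    calc Real.log w ≤ Real.log (Real.exp u) :=
          Real.log_le_log (by positivity) hexp
      _ = u := Real.log_exp u
  exact mul_le_mul_of_nonneg_left htu (by positivity)

lemma cheb_extrapolate (f : ℝ[X]) (M : ℝ) (h : ∀ u : ℝ, |u| ≤ 1 → |f.eval u| ≤ M)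
    {ε : ℝ} (hε : 0 < ε) :
    |f.eval (1 + ε)| ≤ M * Real.exp (f.natDegree * Real.sqrt (2 * ε + ε ^ 2)) := by
  have hM : 0 ≤ M := le_trans (abs_nonneg _) (h 0 (by norm_num))
  set d := f.natDegree with hd
  rcases Nat.eq_zero_or_pos d with hd0 | hd1
  · obtain ⟨c, rfl⟩ : ∃ c, f = C c := ⟨f.coeff 0, Polynomial.eq_C_of_natDegree_eq_zero hd0⟩
    simp only [eval_C] at h ⊢
    rw [hd0]
    simp only [Nat.cast_zero, zero_mul, Real.exp_zero, mul_one]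
    exact h 0 (by norm_num)
  · have hdne : (d:ℝ) ≠ 0 := Nat.cast_ne_zero.mpr (by omega)
    have hπ := Real.pi_pos
    set y : ℝ := 1 + ε with hy
    have hy1 : (1:ℝ) < y := by rw [hy]; linarith
    set v : ℕ → ℝ := fun j => Real.cos (j * Real.pi / d) with hv
    set s : Finset ℕ := range (d+1) with hs
    have hmemIcc : ∀ j ∈ s, (j:ℝ) * Real.pi / d ∈ Set.Icc 0 Real.pi := by
      intro j hj
      rw [hs, mem_range] at hj
      constructor
      · positivity
      · rw [div_le_iff₀ (by positivity)]
        have : (j:ℝ) ≤ (d:ℝ) := by exact_mod_cast Nat.lt_succ_iff.mp hj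
        nlinarith
    have hinj : Set.InjOn v s := by
      intro i hi j hj hij
      have h1 := Real.injOn_cos (hmemIcc i hi) (hmemIcc j hj) hij
      have h2 : (i:ℝ) = (j:ℝ) := by
        have hπne : Real.pi ≠ 0 := ne_of_gt hπ
        field_simp at h1
        tauto
      exact_mod_cast h2
    have hanti : ∀ i ∈ s, ∀ j ∈ s, i < j → v j < v i := by
      intro i hi j hj hij
      refine Real.strictAntiOn_cos (hmemIcc i hi) (hmemIcc j hj) ?_
      have hij' : (i:ℝ) < (j:ℝ) := by exact_mod_cast hij
      have hd0' : (0:ℝ) < d := by positivity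
      have : (i:ℝ) * Real.pi < (j:ℝ) * Real.pi := by nlinarith
      exact (div_lt_div_iff_of_pos_right hd0').mpr this
    have hvle : ∀ j, v j ≤ 1 := fun j => Real.cos_le_one _
    have hvy : ∀ j, v j < y := fun j => lt_of_le_of_lt (hvle j) hy1
    have hne : f ≠ 0 := fun h0 => by simp [hd, h0] at hd1
    have hcard : f.degree < (#s : ℕ) := by
      rw [hs, card_range, Polynomial.degree_eq_natDegree hne]
      exact_mod_cast Nat.lt_succ_self d
    have hf := Lagrange.eq_interpolate hinj hcard
    set ℓ : ℕ → ℝ := fun i => (Lagrange.basis s v i).eval y with hℓ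
    have key : ∀ i ∈ s, |ℓ i| = (-1:ℝ)^i * ℓ i := by
      intro i hi
      rw [hs, mem_range] at hi
      have hval : ℓ i = ∏ j ∈ s.erase i, ((v i - v j)⁻¹ * (y - v j)) :=
        eval_lagrange_basis s v i y
      have hsplit : s.erase i = range i ∪ Ico (i+1) (d+1) := erase_range_split (d+1) i hi
      set F : ℕ → ℝ := fun j => (v i - v j)⁻¹ * (y - v j) with hF
      have hneg : ∀ j ∈ range i, 0 < - F j := by
        intro j hj
        rw [mem_range] at hj
        have h1 : v i < v j :=
          hanti j (by rw [hs, mem_range]; omega) i (by rw [hs, mem_range]; omega) hj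
        have h2 : 0 < y - v j := sub_pos.2 (hvy j)
        have h3 : F j < 0 := mul_neg_of_neg_of_pos (inv_lt_zero.2 (sub_neg.2 h1)) h2
        linarith
      have hpos : ∀ j ∈ Ico (i+1) (d+1), 0 < F j := by
        intro j hj
        rw [mem_Ico] at hj
        have h1 : v j < v i :=
          hanti i (by rw [hs, mem_range]; omega) j (by rw [hs, mem_range]; omega) (by omega)
        have h2 : 0 < y - v j := sub_pos.2 (hvy j)
        exact mul_pos (inv_pos.2 (sub_pos.2 h1)) h2
      have hsplit2 : ℓ i = (∏ j ∈ range i, F j) * ∏ j ∈ Ico (i+1) (d+1), F j := by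
        rw [hval, hsplit, prod_union (erase_range_disj (d+1) i)]
      have h1 : ∏ j ∈ range i, F j = (-1:ℝ)^i * ∏ j ∈ range i, (- F j) := by
        calc ∏ j ∈ range i, F j = ∏ j ∈ range i, ((-1) * (- F j)) := by
              refine prod_congr rfl fun j _ => by ring
          _ = (-1:ℝ)^i * ∏ j ∈ range i, (- F j) := by
              rw [prod_mul_distrib, prod_const, card_range]
      set G : ℝ := (∏ j ∈ range i, (- F j)) * ∏ j ∈ Ico (i+1) (d+1), F j with hG
      have hGpos : 0 < G := mul_pos (prod_pos hneg) (prod_pos hpos)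
      have hℓG : ℓ i = (-1:ℝ)^i * G := by rw [hsplit2, h1, hG]; ring
      rw [hℓG, abs_mul, abs_pow, abs_neg, abs_one, one_pow, one_mul, abs_of_pos hGpos,
        ← mul_assoc, ← mul_pow]
      norm_num
    have hTdeg : (Polynomial.Chebyshev.T ℝ (d:ℤ)).degree < (#s : ℕ) := by
      rw [hs, card_range]
      have h1 : (Polynomial.Chebyshev.T ℝ (d:ℤ)).natDegree < d + 1 :=
        Nat.lt_succ_of_le (cheb_natDegree_le d)
      calc (Polynomial.Chebyshev.T ℝ (d:ℤ)).degree
          ≤ ((Polynomial.Chebyshev.T ℝ (d:ℤ)).natDegree : WithBot ℕ) :=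
            Polynomial.degree_le_natDegree
        _ < ((d+1 : ℕ) : WithBot ℕ) := by exact_mod_cast h1
    have hTeval : ∀ j ∈ s, (Polynomial.Chebyshev.T ℝ (d:ℤ)).eval (v j) = (-1:ℝ)^j := by
      intro j hj
      rw [hv]
      have harg : ((d:ℤ):ℝ) * ((j:ℝ) * Real.pi / d) = (j:ℝ) * Real.pi := by
        push_cast
        field_simp
      rw [Polynomial.Chebyshev.T_real_cos, harg, cos_nat_pi]
    have hT := Lagrange.eq_interpolate_of_eval_eq _ hinj hTdeg hTeval
    have hTsum : (Polynomial.Chebyshev.T ℝ (d:ℤ)).eval y = ∑ i ∈ s, (-1:ℝ)^i * ℓ i := by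
      rw [hT, eval_interp]
    have hchain : |f.eval y| ≤ M * (Polynomial.Chebyshev.T ℝ (d:ℤ)).eval y := by
      have hfy : f.eval y = ∑ i ∈ s, f.eval (v i) * ℓ i := by
        conv_lhs => rw [hf]
        rw [eval_interp]
      rw [hfy]
      calc |∑ i ∈ s, f.eval (v i) * ℓ i| ≤ ∑ i ∈ s, |f.eval (v i) * ℓ i| :=
            Finset.abs_sum_le_sum_abs _ _
        _ ≤ ∑ i ∈ s, M * ((-1:ℝ)^i * ℓ i) := by
            refine sum_le_sum fun i hi => ?_
            rw [abs_mul, key i hi]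
            refine mul_le_mul_of_nonneg_right (h (v i) (Real.abs_cos_le_one _)) ?_
            rw [← key i hi]
            exact abs_nonneg _
        _ = M * ∑ i ∈ s, (-1:ℝ)^i * ℓ i := by rw [mul_sum]
        _ = M * (Polynomial.Chebyshev.T ℝ (d:ℤ)).eval y := by rw [hTsum]
    exact hchain.trans (mul_le_mul_of_nonneg_left (cheb_eval_le d hε) hM)

lemma interp_bound_big (k N : ℕ) (hk : 1 ≤ k) (hkN : k ≤ N) (δ : ℝ) (hδ : 0 ≤ δ)
    (r : ℕ → ℝ) (hr : ∀ i, i < k → |r i| ≤ δ) (x : ℝ) (hx1 : (k:ℝ) ≤ x) (hx2 : x ≤ N) :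
    |(Lagrange.interpolate (range k) (fun i => (i:ℝ)) r).eval x|
      ≤ δ * (2*(N:ℝ))^k / ((k-1).factorial : ℝ) := by
  have hfacpos : (0:ℝ) < ((k-1).factorial : ℝ) := by exact_mod_cast (k-1).factorial_pos
  have step : ∀ i ∈ range k, |r i * (Lagrange.basis (range k) (fun i => (i:ℝ)) i).eval x|
      ≤ δ * ((N:ℝ)^(k-1) * (2^(k-1) / ((k-1).factorial : ℝ))) := by
    intro i hi
    rw [mem_range] at hi
    rw [abs_mul, abs_basis_eval]
    have hcard : ((range k).erase i).card = k - 1 := by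
      rw [card_erase_of_mem (mem_range.2 hi), card_range]
    have hnum : ∏ j ∈ (range k).erase i, |x - (j:ℝ)| ≤ (N:ℝ)^(k-1) := by
      calc ∏ j ∈ (range k).erase i, |x - (j:ℝ)| ≤ ∏ _j ∈ (range k).erase i, (N:ℝ) := by
            refine prod_le_prod (fun j _ => abs_nonneg _) fun j hj => ?_
            have hjk : j < k := mem_range.1 (mem_of_mem_erase hj)
            have hjx : (j:ℝ) ≤ x := le_trans (by exact_mod_cast hjk.le) hx1
            have hj0 : (0:ℝ) ≤ (j:ℝ) := Nat.cast_nonneg j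
            rw [abs_of_nonneg (sub_nonneg.2 hjx)]
            linarith
        _ = (N:ℝ)^(k-1) := by rw [prod_const, hcard]
    have hden : (∏ j ∈ (range k).erase i, |(i:ℝ) - (j:ℝ)|)⁻¹
        ≤ 2^(k-1) / ((k-1).factorial : ℝ) := by
      rw [prod_erase_abs_eq k i hi]
      have hnat : (k-1).factorial ≤ 2^(k-1) * (i.factorial * (k-1-i).factorial) := by
        have h1 : (k-1).choose i * i.factorial * (k-1-i).factorial = (k-1).factorial :=
          Nat.choose_mul_factorial_mul_factorial (by omega)
        have h2 : (k-1).choose i ≤ 2^(k-1) := choose_le_two_pow (by omega)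
        calc (k-1).factorial = (k-1).choose i * (i.factorial * (k-1-i).factorial) := by
              rw [← h1]; ring
          _ ≤ 2^(k-1) * (i.factorial * (k-1-i).factorial) := Nat.mul_le_mul_right _ h2
      have hcast : ((k-1).factorial : ℝ)
          ≤ 2^(k-1) * ((i.factorial : ℝ) * ((k-1-i).factorial : ℝ)) := by
        exact_mod_cast hnat
      have hpos : (0:ℝ) < (i.factorial : ℝ) * ((k-1-i).factorial : ℝ) := by
        have := i.factorial_pos
        have := (k-1-i).factorial_pos
        positivity
      rw [inv_eq_one_div, div_le_div_iff₀ hpos hfacpos]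
      nlinarith
    have h0 : (0:ℝ) ≤ ∏ j ∈ (range k).erase i, |x - (j:ℝ)| :=
      prod_nonneg fun j _ => abs_nonneg _
    have h0' : (0:ℝ) ≤ (∏ j ∈ (range k).erase i, |(i:ℝ) - (j:ℝ)|)⁻¹ :=
      inv_nonneg.2 (prod_nonneg fun j _ => abs_nonneg _)
    exact mul_le_mul (hr i hi)
      (mul_le_mul hnum hden h0' (by positivity)) (by positivity) hδ
  rw [eval_interp]
  calc |∑ i ∈ range k, r i * (Lagrange.basis (range k) (fun i => (i:ℝ)) i).eval x|
      ≤ ∑ i ∈ range k, |r i * (Lagrange.basis (range k) (fun i => (i:ℝ)) i).eval x| :=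
        Finset.abs_sum_le_sum_abs _ _
    _ ≤ ∑ _i ∈ range k, δ * ((N:ℝ)^(k-1) * (2^(k-1) / ((k-1).factorial : ℝ))) :=
        sum_le_sum step
    _ = (k:ℝ) * (δ * ((N:ℝ)^(k-1) * (2^(k-1) / ((k-1).factorial : ℝ)))) := by
        rw [sum_const, card_range, nsmul_eq_mul]
    _ ≤ δ * (2*(N:ℝ))^k / ((k-1).factorial : ℝ) := by
        have hnat2 : k * (N^(k-1) * 2^(k-1)) ≤ (2*N)^k := by
          have he : (2*N)^k = (2*N)^(k-1) * (2*N) := by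
            rw [← pow_succ]
            congr 1
            omega
          calc k * (N^(k-1) * 2^(k-1)) ≤ (2*N) * (N^(k-1) * 2^(k-1)) :=
                Nat.mul_le_mul_right _ (by omega)
            _ = (2*N)^k := by rw [he, Nat.mul_pow]; ring
        have hcast2 : (k:ℝ) * ((N:ℝ)^(k-1) * 2^(k-1)) ≤ (2*(N:ℝ))^k := by
          exact_mod_cast hnat2
        rw [div_eq_mul_inv]
        calc (k:ℝ) * (δ * ((N:ℝ)^(k-1) * (2^(k-1) / ((k-1).factorial : ℝ))))
            = δ * ((k:ℝ) * ((N:ℝ)^(k-1) * 2^(k-1))) * ((k-1).factorial : ℝ)⁻¹ := by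
              rw [div_eq_mul_inv]; ring
          _ ≤ δ * (2*(N:ℝ))^k * ((k-1).factorial : ℝ)⁻¹ := by
              have := mul_le_mul_of_nonneg_left hcast2 hδ
              have h5 : (0:ℝ) ≤ ((k-1).factorial : ℝ)⁻¹ := by positivity
              exact mul_le_mul_of_nonneg_right this h5

lemma interp_bound_at_k (k : ℕ) (hk : 1 ≤ k) (δ : ℝ) (hδ : 0 ≤ δ)
    (r : ℕ → ℝ) (hr : ∀ i, i < k → |r i| ≤ δ) :
    |(Lagrange.interpolate (range k) (fun i => (i:ℝ)) r).eval (k:ℝ)|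
      ≤ δ * (k:ℝ) * 2^(k-1) := by
  have step : ∀ i ∈ range k,
      |(Lagrange.basis (range k) (fun i => (i:ℝ)) i).eval (k:ℝ)| = (k.choose i : ℝ) := by
    intro i hi
    rw [mem_range] at hi
    rw [abs_basis_eval, prod_erase_abs_eq k i hi]
    have habs : ∏ j ∈ (range k).erase i, |(k:ℝ) - (j:ℝ)|
        = ∏ j ∈ (range k).erase i, ((k:ℝ) - (j:ℝ)) := by
      refine prod_congr rfl fun j hj => ?_
      have hjk : j < k := mem_range.1 (mem_of_mem_erase hj)
      have : (j:ℝ) < (k:ℝ) := by exact_mod_cast hjk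
      rw [abs_of_pos (by linarith)]
    have h5 : (∏ j ∈ (range k).erase i, ((k:ℝ) - (j:ℝ))) * ((k:ℝ) - (i:ℝ))
        = (k.factorial : ℝ) := by
      rw [Finset.prod_erase_mul (range k) _ (mem_range.2 hi)]
      exact prod_range_cast_sub_factorial k
    have hkey : k.choose i * (i.factorial * (k-1-i).factorial) * (k - i) = k.factorial := by
      have h1 : k.choose i * i.factorial * (k-i).factorial = k.factorial :=
        Nat.choose_mul_factorial_mul_factorial hi.le
      have h2 : (k-i).factorial = (k-i) * (k-1-i).factorial := by
        rw [show k-i = (k-i-1)+1 by omega, Nat.factorial_succ]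
        congr 2
        omega
      calc k.choose i * (i.factorial * (k-1-i).factorial) * (k - i)
          = k.choose i * i.factorial * ((k-i) * (k-1-i).factorial) := by ring
        _ = k.factorial := by rw [← h2]; exact h1
    have hki : ((k:ℝ) - (i:ℝ)) = ((k - i : ℕ) : ℝ) := by
      rw [Nat.cast_sub hi.le]
    have hne : ((k - i : ℕ) : ℝ) ≠ 0 := Nat.cast_ne_zero.mpr (by omega)
    have h6 : ∏ j ∈ (range k).erase i, ((k:ℝ) - (j:ℝ))
        = (k.choose i : ℝ) * ((i.factorial : ℝ) * ((k-1-i).factorial : ℝ)) := by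
      refine mul_right_cancel₀ hne ?_
      rw [← hki, h5]
      rw [hki]
      exact_mod_cast hkey.symm
    rw [habs, h6]
    have hpos : ((i.factorial : ℝ) * ((k-1-i).factorial : ℝ)) ≠ 0 := by
      have := i.factorial_pos
      have := (k-1-i).factorial_pos
      positivity
    field_simp
  have hsum : ∑ i ∈ range k, k.choose i = 2^k - 1 := by
    have h1 := Nat.sum_range_choose k
    have h2 : ∑ i ∈ range (k+1), k.choose i = (∑ i ∈ range k, k.choose i) + k.choose k :=
      Finset.sum_range_succ _ _
    simp only [Nat.choose_self] at h2
    omega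
  have hfin : (2^k - 1 : ℕ) ≤ k * 2^(k-1) := by
    have he : (2:ℕ)^k = 2 * 2^(k-1) := by
      rw [← pow_succ']
      congr 1
      omega
    rcases Nat.lt_or_ge k 2 with h | h
    · interval_cases k
      · norm_num
    · have : 2 * 2^(k-1) ≤ k * 2^(k-1) := Nat.mul_le_mul_right _ h
      omega
  rw [eval_interp]
  calc |∑ i ∈ range k, r i * (Lagrange.basis (range k) (fun i => (i:ℝ)) i).eval (k:ℝ)|
      ≤ ∑ i ∈ range k, |r i * (Lagrange.basis (range k) (fun i => (i:ℝ)) i).eval (k:ℝ)| :=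
        Finset.abs_sum_le_sum_abs _ _
    _ ≤ ∑ i ∈ range k, δ * (k.choose i : ℝ) := by
        refine sum_le_sum fun i hi => ?_
        rw [abs_mul, step i hi]
        exact mul_le_mul_of_nonneg_right (hr i (mem_range.1 hi)) (Nat.cast_nonneg _)
    _ = δ * (((∑ i ∈ range k, k.choose i : ℕ)) : ℝ) := by
        rw [← mul_sum, Nat.cast_sum]
    _ ≤ δ * ((k * 2^(k-1) : ℕ) : ℝ) := by
        refine mul_le_mul_of_nonneg_left ?_ hδ
        exact_mod_cast hsum ▸ hfin
    _ = δ * (k:ℝ) * 2^(k-1) := by push_cast; ring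

end KeyPolyAux

open KeyPolyAux

/-- A pair `a, b` of positive reals satisfies the Coppersmith–Rivlin property if
every real polynomial of degree `d ≤ n` that is bounded by 1 in absolute value
at the integers `0, …, n` is bounded by `a·e^(b·d²/n)` on the real interval `[0, n]`. -/
def CoppersmithRivlinProperty (a b : ℝ) : Prop :=
  ∀ (n : ℕ), 1 ≤ n →
    ∀ q : Polynomial ℝ, q.natDegree ≤ n →
      (∀ i : ℕ, i ≤ n → |q.eval (i : ℝ)| ≤ 1) →
      ∀ x : ℝ, 0 ≤ x → x ≤ n →
        |q.eval x| ≤ a * Real.exp (b * (q.natDegree : ℝ) ^ 2 / n)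

/-- **Key polynomial lemma (Lemma 6 of the paper).** -/
theorem key_polynomial_lemma (a b : ℝ) (ha : 0 < a) (hb : 0 < b)
    (hCR : CoppersmithRivlinProperty a b)
    (k D N C : ℕ) (hk : 1 ≤ k) (hkD : k ≤ D) (hC : 1 ≤ C) (hkCN : k + C < N)
    (δ σ : ℝ) (hδ : 0 ≤ δ)
    (p : Polynomial ℝ) (hdeg : p.natDegree ≤ D)
    (hsmall : ∀ i : ℕ, i < k → -δ ≤ p.eval (i : ℝ) ∧ p.eval (i : ℝ) ≤ δ)
    (hk' : p.eval (k : ℝ) = σ)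
    (hbound : ∀ i : ℕ, i ≤ N → -δ ≤ p.eval (i : ℝ) ∧ p.eval (i : ℝ) ≤ 1 + δ) :
    σ ≤ a * (1 + δ + δ * (2 * (N : ℝ)) ^ k / (Nat.factorial (k - 1) : ℝ)) *
          Real.exp (b * ((D : ℝ) - k) ^ 2 / ((N : ℝ) - k - C)
            + 2 * ((D : ℝ) - k) *
                Real.sqrt (2 * (2 * (C : ℝ) / ((N : ℝ) - k - C))
                  + (2 * (C : ℝ) / ((N : ℝ) - k - C)) ^ 2)
            - k * Real.log ((C : ℝ) / k))
        + δ * k * 2 ^ (k - 1) := by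
  classical
  have ha1 : 1 ≤ a := by
    have h := hCR 1 le_rfl 1 (by simp) (fun i _ => by simp) 0 le_rfl (by norm_num)
    simpa using h
  have hkN : k < N := by omega
  have hkNle : k ≤ N := hkN.le
  set m : ℕ := N - k - C with hm
  have hm1 : 1 ≤ m := by omega
  set mR : ℝ := (N:ℝ) - k - C with hmR
  have hmm : mR = (m:ℝ) := by
    rw [hmR, hm, show N - k - C = N - (k + C) by omega, Nat.cast_sub (by omega)]
    push_cast
    ring
  have hmRpos : 0 < mR := by
    rw [hmm]
    exact_mod_cast hm1
  set μ : ℝ := 2 * (C:ℝ) / mR with hμ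
  have hCpos : (0:ℝ) < C := by exact_mod_cast hC
  have hkpos : (0:ℝ) < k := by exact_mod_cast hk
  have hμpos : 0 < μ := by rw [hμ]; positivity
  have hμm : μ * mR = 2 * (C:ℝ) := by rw [hμ]; field_simp
  set u : ℝ := Real.sqrt (2*μ + μ^2) with hu
  have hu0 : 0 ≤ u := Real.sqrt_nonneg _
  have huμ : μ ≤ u := by
    have h1 : u^2 = 2*μ + μ^2 := Real.sq_sqrt (by positivity)
    nlinarith [hu0, hμpos]
  set F : ℝ := 1 + δ + δ * (2*(N:ℝ))^k / ((k-1).factorial : ℝ) with hF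
  have hfacpos : (0:ℝ) < ((k-1).factorial : ℝ) := by exact_mod_cast (k-1).factorial_pos
  have hF1 : 1 + δ ≤ F := by
    rw [hF]
    have : 0 ≤ δ * (2*(N:ℝ))^k / ((k-1).factorial : ℝ) := by positivity
    linarith
  have hFpos : 0 < F := by linarith
  set E : ℝ := b*((D:ℝ)-k)^2/mR + 2*((D:ℝ)-k)*u - k*Real.log ((C:ℝ)/k) with hE
  have hσδ : σ ≤ 1 + δ := hk' ▸ (hbound k hkNle).2
  have hδk0 : (0:ℝ) ≤ δ * k * 2^(k-1) := by positivity
  rcases Nat.lt_or_ge (m + k) D with hbig | hsmallD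
  · -- easy case : degree too large, the exponential is ≥ 1
    have hDk : (m:ℝ) + 1 ≤ (D:ℝ) - k := by
      have h1 : m + k + 1 ≤ D := by omega
      have h2 : ((m:ℝ)) + k + 1 ≤ (D:ℝ) := by exact_mod_cast h1
      linarith
    have ht1 : 0 ≤ b*((D:ℝ)-k)^2/mR := by positivity
    have hklog : (k:ℝ) * Real.log ((C:ℝ)/k) ≤ C := by
      rcases le_or_gt ((C:ℝ)/k) 1 with h1 | h1
      · have h2 : Real.log ((C:ℝ)/k) ≤ 0 := Real.log_nonpos (by positivity) h1
        nlinarith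
      · have hlog := Real.log_le_sub_one_of_pos (show 0 < (C:ℝ)/k by positivity)
        have h2 : Real.log ((C:ℝ)/k) ≤ (C:ℝ)/k := by linarith
        calc (k:ℝ) * Real.log ((C:ℝ)/k) ≤ (k:ℝ) * ((C:ℝ)/k) :=
              mul_le_mul_of_nonneg_left h2 hkpos.le
          _ = C := by field_simp
    have hterm2 : 4*(C:ℝ) ≤ 2*((D:ℝ)-k)*u := by
      have hm1R : (1:ℝ) ≤ (m:ℝ) := by exact_mod_cast hm1
      have h4 : 0 ≤ (D:ℝ)-k := by linarith
      have c1 : 2*((D:ℝ)-k)*μ ≤ 2*((D:ℝ)-k)*u :=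
        mul_le_mul_of_nonneg_left huμ (by linarith)
      have c2 : 2*(mR+1)*μ ≤ 2*((D:ℝ)-k)*μ := by
        have h5 : mR + 1 ≤ (D:ℝ) - k := by rw [hmm]; linarith
        exact mul_le_mul_of_nonneg_right (by linarith) hμpos.le
      have c3 : 2*(mR+1)*μ = 4*(C:ℝ) + 2*μ := by
        have e1 : 2*(mR+1)*μ = 2*(μ*mR) + 2*μ := by ring
        rw [e1, hμm]
        ring
      linarith
    have hE0 : 0 ≤ E := by
      rw [hE]
      linarith
    have h1 : 1 ≤ Real.exp E := Real.one_le_exp hE0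
    have h2 : 1 + δ ≤ a * F * Real.exp E := by
      have h3 : F ≤ a * F := le_mul_of_one_le_left hFpos.le ha1
      have h4 : a * F ≤ a * F * Real.exp E := le_mul_of_one_le_right (by positivity) h1
      linarith
    linarith
  · -- main case : apply CR + Chebyshev extrapolation
    set L : ℝ[X] := Lagrange.interpolate (range k) (fun i : ℕ => (i:ℝ))
      (fun i : ℕ => p.eval (i:ℝ)) with hL
    have hinj : Set.InjOn (fun i : ℕ => (i:ℝ)) (range k) :=
      fun i _ j _ h => Nat.cast_injective h
    have hrsmall : ∀ i, i < k → |p.eval (i:ℝ)| ≤ δ :=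
      fun i hi => abs_le.mpr ⟨(hsmall i hi).1, (hsmall i hi).2⟩
    have hLk : |L.eval (k:ℝ)| ≤ δ * (k:ℝ) * 2^(k-1) :=
      interp_bound_at_k k hk δ hδ _ hrsmall
    have hLbig : ∀ x : ℝ, (k:ℝ) ≤ x → x ≤ N →
        |L.eval x| ≤ δ * (2*(N:ℝ))^k / ((k-1).factorial : ℝ) :=
      fun x h1 h2 => interp_bound_big k N hk hkNle δ hδ _ hrsmall x h1 h2
    set Φ : ℝ[X] := ∏ j ∈ range k, (X - Polynomial.C (j:ℝ)) with hΦ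
    have hdvd : Φ ∣ (p - L) := by
      rw [hΦ]
      refine Finset.prod_dvd_of_coprime ?_ ?_
      · exact (Polynomial.pairwise_coprime_X_sub_C
          (show Function.Injective (fun i : ℕ => (i:ℝ)) from Nat.cast_injective)).set_pairwise _
      · intro j hj
        rw [Polynomial.dvd_iff_isRoot]
        have h1 := Lagrange.eval_interpolate_at_node (fun i : ℕ => p.eval (i:ℝ)) hinj hj
        simp only [Polynomial.IsRoot, eval_sub]
        rw [hL]
        rw [h1]
        ring
    obtain ⟨w, hw⟩ := hdvd
    have hΦne : Φ ≠ 0 := by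
      rw [hΦ]
      exact (monic_prod_of_monic _ _ fun j _ => monic_X_sub_C _).ne_zero
    have hΦdeg : Φ.natDegree = k := by
      rw [hΦ, Polynomial.natDegree_prod _ _ (fun j _ => Polynomial.X_sub_C_ne_zero _)]
      have hone : ∀ j ∈ range k, (X - Polynomial.C (j:ℝ)).natDegree = 1 :=
        fun j _ => Polynomial.natDegree_X_sub_C _
      rw [Finset.sum_congr rfl hone]
      simp
    have hLdeg : L.natDegree ≤ D := by
      rcases eq_or_ne L 0 with h0 | h0
      · simp [h0]
      · have h1 := Lagrange.degree_interpolate_lt (fun i : ℕ => p.eval (i:ℝ)) hinj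
        rw [card_range, ← hL] at h1
        have h2 : L.natDegree < k := by
          rwa [Polynomial.degree_eq_natDegree h0, Nat.cast_lt] at h1
        omega
    have hwdeg : w.natDegree ≤ D - k := by
      rcases eq_or_ne w 0 with h0 | h0
      · simp [h0]
      · have h1 : (p - L).natDegree = Φ.natDegree + w.natDegree := by
          rw [hw, Polynomial.natDegree_mul hΦne h0]
        have h2 : (p - L).natDegree ≤ D :=
          (Polynomial.natDegree_sub_le _ _).trans (max_le hdeg hLdeg)
        omega
    have heval : ∀ x : ℝ, p.eval x
        = L.eval x + (∏ j ∈ range k, (x - (j:ℝ))) * w.eval x := by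
      intro x
      have h1 : (p - L).eval x = Φ.eval x * w.eval x := by rw [hw, eval_mul]
      have h2 : Φ.eval x = ∏ j ∈ range k, (x - (j:ℝ)) := by
        rw [hΦ, eval_prod]
        exact prod_congr rfl fun j _ => by simp
      rw [eval_sub, h2] at h1
      linarith
    set B : ℝ := F / (C:ℝ)^k with hB
    have hBpos : 0 < B := by rw [hB]; positivity
    have hwB : ∀ i : ℕ, k + C ≤ i → i ≤ N → |w.eval (i:ℝ)| ≤ B := by
      intro i hi1 hi2
      have hik : (k:ℝ) ≤ (i:ℝ) := by exact_mod_cast (by omega : k ≤ i)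
      have hiN : ((i:ℕ):ℝ) ≤ N := by exact_mod_cast hi2
      have hprod : (C:ℝ)^k ≤ ∏ j ∈ range k, ((i:ℝ) - (j:ℝ)) := by
        calc (C:ℝ)^k = ∏ _j ∈ range k, (C:ℝ) := by rw [prod_const, card_range]
          _ ≤ ∏ j ∈ range k, ((i:ℝ) - (j:ℝ)) := by
              refine prod_le_prod (fun _ _ => hCpos.le) fun j hj => ?_
              have hjk : j < k := mem_range.1 hj
              have h3 : C + j ≤ i := by omega
              have h4 : (C:ℝ) + j ≤ i := by exact_mod_cast h3
              linarith
      have hP : |p.eval (i:ℝ) - L.eval (i:ℝ)| ≤ F := by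
        have h1 : |p.eval (i:ℝ)| ≤ 1 + δ := by
          refine abs_le.mpr ⟨?_, (hbound i hi2).2⟩
          have := (hbound i hi2).1
          linarith
        have h2 := hLbig (i:ℝ) hik hiN
        have h3 := abs_add_le (p.eval (i:ℝ)) (-(L.eval (i:ℝ)))
        rw [abs_neg] at h3
        rw [hF]
        have h4 : |p.eval (i:ℝ) - L.eval (i:ℝ)| ≤ |p.eval (i:ℝ)| + |L.eval (i:ℝ)| := by
          simpa [sub_eq_add_neg] using h3
        linarith
      have h3 : (∏ j ∈ range k, ((i:ℝ) - (j:ℝ))) * w.eval (i:ℝ)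
          = p.eval (i:ℝ) - L.eval (i:ℝ) := by
        have := heval (i:ℝ)
        linarith
      have hΦipos : 0 < ∏ j ∈ range k, ((i:ℝ) - (j:ℝ)) :=
        lt_of_lt_of_le (by positivity) hprod
      have h4 : |w.eval (i:ℝ)| * (C:ℝ)^k ≤ F := by
        calc |w.eval (i:ℝ)| * (C:ℝ)^k
            ≤ |w.eval (i:ℝ)| * (∏ j ∈ range k, ((i:ℝ) - (j:ℝ))) :=
              mul_le_mul_of_nonneg_left hprod (abs_nonneg _)
          _ = |(∏ j ∈ range k, ((i:ℝ) - (j:ℝ))) * w.eval (i:ℝ)| := by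
              rw [abs_mul, abs_of_pos hΦipos]
              ring
          _ = |p.eval (i:ℝ) - L.eval (i:ℝ)| := by rw [h3]
          _ ≤ F := hP
      rw [hB, le_div_iff₀ (by positivity : (0:ℝ) < (C:ℝ)^k)]
      exact h4
    set s₂ : ℝ[X] := w.comp (X + Polynomial.C ((k:ℝ)+C)) with hs₂
    set q : ℝ[X] := Polynomial.C B⁻¹ * s₂ with hq
    have hs₂eval : ∀ x : ℝ, s₂.eval x = w.eval (x + ((k:ℝ)+C)) := by
      intro x
      rw [hs₂, eval_comp]
      simp
    have hs₂deg : s₂.natDegree = w.natDegree := by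
      rw [hs₂, Polynomial.natDegree_comp, Polynomial.natDegree_X_add_C, mul_one]
    have hqdeg : q.natDegree = w.natDegree := by
      rw [hq, Polynomial.natDegree_C_mul (inv_ne_zero hBpos.ne'), hs₂deg]
    have hqdegm : q.natDegree ≤ m := by
      rw [hqdeg]
      omega
    have hqvals : ∀ i : ℕ, i ≤ m → |q.eval (i:ℝ)| ≤ 1 := by
      intro i hi
      have h1 : q.eval (i:ℝ) = B⁻¹ * w.eval (((i+k+C : ℕ)):ℝ) := by
        have e : ((i:ℝ) + ((k:ℝ)+(C:ℝ))) = ((i+k+C : ℕ):ℝ) := by push_cast; ring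
        rw [hq, eval_mul, eval_C, hs₂eval, e]
      rw [h1, abs_mul, abs_of_pos (inv_pos.2 hBpos)]
      have h2 := hwB (i+k+C) (by omega) (by omega)
      calc B⁻¹ * |w.eval (((i+k+C : ℕ)):ℝ)| ≤ B⁻¹ * B :=
            mul_le_mul_of_nonneg_left h2 (inv_pos.2 hBpos).le
        _ = 1 := inv_mul_cancel₀ hBpos.ne'
    have hCRq := hCR m hm1 q hqdegm hqvals
    set dq : ℕ := q.natDegree with hdq
    set M : ℝ := a * Real.exp (b * (dq:ℝ)^2 / (m:ℝ)) with hM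
    have hMpos : 0 < M := by positivity
    have hm2ne : ((m:ℝ)/2) ≠ 0 := by
      have : (0:ℝ) < (m:ℝ) := by exact_mod_cast hm1
      positivity
    set g : ℝ[X] := q.comp (Polynomial.C ((m:ℝ)/2) * (1 - X)) with hg
    have hlin : (Polynomial.C ((m:ℝ)/2) * (1 - X) : ℝ[X]).natDegree = 1 := by
      rw [Polynomial.natDegree_C_mul hm2ne,
        show (1 - X : ℝ[X]) = -(X - Polynomial.C 1) by rw [Polynomial.C_1]; ring,
        Polynomial.natDegree_neg, Polynomial.natDegree_X_sub_C]
    have hgdeg : g.natDegree = dq := by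
      rw [hg, Polynomial.natDegree_comp, hlin, mul_one, hdq]
    have hgev : ∀ x : ℝ, g.eval x = q.eval ((m:ℝ)/2 * (1 - x)) := by
      intro x
      rw [hg, eval_comp]
      simp
    have hgbound : ∀ x : ℝ, |x| ≤ 1 → |g.eval x| ≤ M := by
      intro x hx
      rw [hgev]
      rcases abs_le.mp hx with ⟨hx1, hx2⟩
      have hm0 : (0:ℝ) ≤ (m:ℝ) := Nat.cast_nonneg _
      refine hCRq _ ?_ ?_
      · have : (0:ℝ) ≤ 1 - x := by linarith
        positivity
      · nlinarith
    have hmμ : (m:ℝ)/2 * (1 - (1+μ)) = -(C:ℝ) := by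
      have e1 : (m:ℝ)/2 * (1 - (1+μ)) = -(μ * mR)/2 := by rw [hmm]; ring
      rw [e1, hμm]
      ring
    have hgμ : g.eval (1+μ) = B⁻¹ * w.eval (k:ℝ) := by
      rw [hgev, hmμ, hq, eval_mul, eval_C, hs₂eval,
        show -(C:ℝ) + ((k:ℝ)+C) = (k:ℝ) by ring]
    have hext := cheb_extrapolate g M hgbound hμpos
    rw [hgμ, hgdeg, ← hu] at hext
    have hwk : |w.eval (k:ℝ)| ≤ B * (M * Real.exp (dq * u)) := by
      have h1 : |B⁻¹ * w.eval (k:ℝ)| = B⁻¹ * |w.eval (k:ℝ)| := by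
        rw [abs_mul, abs_of_pos (inv_pos.2 hBpos)]
      rw [h1] at hext
      calc |w.eval (k:ℝ)| = B * (B⁻¹ * |w.eval (k:ℝ)|) := by field_simp
        _ ≤ B * (M * Real.exp (dq * u)) := mul_le_mul_of_nonneg_left hext hBpos.le
    have hσ1 : σ ≤ |L.eval (k:ℝ)| + (k.factorial : ℝ) * |w.eval (k:ℝ)| := by
      have h1 := heval (k:ℝ)
      rw [hk'] at h1
      rw [prod_range_cast_sub_factorial k] at h1
      have h3 : L.eval (k:ℝ) ≤ |L.eval (k:ℝ)| := le_abs_self _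
      have h4 : (k.factorial:ℝ) * w.eval (k:ℝ) ≤ (k.factorial:ℝ) * |w.eval (k:ℝ)| :=
        mul_le_mul_of_nonneg_left (le_abs_self _) (by positivity)
      linarith
    have hfinal : (k.factorial : ℝ) * (B * (M * Real.exp ((dq:ℝ) * u)))
        ≤ a * F * Real.exp E := by
      have hkk : (k.factorial : ℝ) ≤ (k:ℝ)^k := by exact_mod_cast Nat.factorial_le_pow k
      have hkC : ((k:ℝ)/C)^k = Real.exp (- ((k:ℝ) * Real.log ((C:ℝ)/k))) := by
        have h1 : Real.log (((k:ℝ)/C)^k) = (k:ℝ) * Real.log ((k:ℝ)/C) := by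
          rw [Real.log_pow]
        have h2 : Real.log ((k:ℝ)/C) = - Real.log ((C:ℝ)/k) := by
          rw [Real.log_div (by positivity : (k:ℝ) ≠ 0) (by positivity : (C:ℝ) ≠ 0),
            Real.log_div (by positivity : (C:ℝ) ≠ 0) (by positivity : (k:ℝ) ≠ 0)]
          ring
        rw [← Real.exp_log (show (0:ℝ) < ((k:ℝ)/C)^k by positivity), h1, h2]
        congr 1
        ring
      have hdqDk : (dq:ℝ) ≤ (D:ℝ) - k := by
        have h5 : dq ≤ D - k := by omega
        calc (dq:ℝ) ≤ ((D-k : ℕ):ℝ) := by exact_mod_cast h5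
          _ = (D:ℝ) - k := by rw [Nat.cast_sub hkD]
      have hdq0 : (0:ℝ) ≤ (dq:ℝ) := Nat.cast_nonneg _
      have hDk0 : (0:ℝ) ≤ (D:ℝ) - k := le_trans hdq0 hdqDk
      have hexp1 : b * (dq:ℝ)^2 / (m:ℝ) ≤ b * ((D:ℝ)-k)^2 / mR := by
        rw [hmm]
        gcongr
      have hexp2 : (dq:ℝ) * u ≤ 2*((D:ℝ)-k)*u := by nlinarith
      calc (k.factorial : ℝ) * (B * (M * Real.exp ((dq:ℝ) * u)))
          = a * F * (((k.factorial : ℝ)/(C:ℝ)^k)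
              * Real.exp (b * (dq:ℝ)^2 / (m:ℝ) + (dq:ℝ) * u)) := by
            rw [hB, hM, Real.exp_add]
            field_simp
        _ ≤ a * F * (((k:ℝ)/C)^k
              * Real.exp (b * ((D:ℝ)-k)^2 / mR + 2*((D:ℝ)-k)*u)) := by
            have hq1 : ((k.factorial : ℝ)/(C:ℝ)^k) ≤ ((k:ℝ)/C)^k := by
              rw [div_pow]
              gcongr
            have hq2 : Real.exp (b * (dq:ℝ)^2 / (m:ℝ) + (dq:ℝ) * u)
                ≤ Real.exp (b * ((D:ℝ)-k)^2 / mR + 2*((D:ℝ)-k)*u) :=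
              Real.exp_le_exp.mpr (by linarith)
            have h0 : (0:ℝ) ≤ a * F := by positivity
            refine mul_le_mul_of_nonneg_left ?_ h0
            exact mul_le_mul hq1 hq2 (Real.exp_pos _).le (by positivity)
        _ = a * F * Real.exp E := by
            rw [hkC, ← Real.exp_add, hE]
            congr 1
            ring
    calc σ ≤ |L.eval (k:ℝ)| + (k.factorial : ℝ) * |w.eval (k:ℝ)| := hσ1
      _ ≤ δ * (k:ℝ) * 2^(k-1)
            + (k.factorial : ℝ) * (B * (M * Real.exp ((dq:ℝ) * u))) :=
          add_le_add hLk (mul_le_mul_of_nonneg_left hwk (by positivity))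
      _ ≤ δ * (k:ℝ) * 2^(k-1) + a * F * Real.exp E := add_le_add_right hfinal _
      _ = a * F * Real.exp E + δ * (k:ℝ) * 2^(k-1) := by ring
end

section
/- Let k ≥ 1 be an integer, let N ≥ k be a real number, let δ ≥ 0 be real, and let r be a real polynomial of degree at most k−1 such that |r(i)| ≤ δ for every integer i ∈ {0, 1, …, k−1}. Then |r(x)| ≤ δ·(2N)^k/(k−1)! for all real x ∈ [0, N]. -/
open Polynomial Finset

lemma prod_nodes_nat (k i : ℕ) (hi : i < k) :
    ∏ j ∈ (Finset.range k).erase i, (if j < i then i - j else j - i) =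
      Nat.factorial i * Nat.factorial (k - 1 - i) := by
  have hsplit : (Finset.range k).erase i = Finset.range i ∪ Finset.Ico (i+1) k := by
    ext j
    simp only [Finset.mem_erase, Finset.mem_range, Finset.mem_Ico, Finset.mem_union]
    omega
  have hdisj : Disjoint (Finset.range i) (Finset.Ico (i+1) k) := by
    simp only [Finset.disjoint_left, Finset.mem_range, Finset.mem_Ico]
    omega
  rw [hsplit, Finset.prod_union hdisj]
  have h1 : ∏ j ∈ Finset.range i, (if j < i then i - j else j - i) = Nat.factorial i := by
    rw [Finset.prod_congr rfl (fun j hj => if_pos (Finset.mem_range.mp hj))]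
    rw [← Finset.prod_range_add_one_eq_factorial i]
    rw [← Finset.prod_range_reflect (fun j => j + 1) i]
    exact Finset.prod_congr rfl (fun j hj => by rw [Finset.mem_range] at hj; omega)
  have h2 : ∏ j ∈ Finset.Ico (i+1) k, (if j < i then i - j else j - i)
      = Nat.factorial (k - 1 - i) := by
    rw [Finset.prod_congr rfl (fun j hj => by
      have := Finset.mem_Ico.mp hj
      rw [if_neg (by omega)])]
    rw [Finset.prod_Ico_eq_prod_range]
    rw [← Finset.prod_range_add_one_eq_factorial (k - 1 - i)]
    have hk : k - (i + 1) = k - 1 - i := by omega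
    rw [hk]
    exact Finset.prod_congr rfl (fun j _ => by omega)
  rw [h1, h2]

lemma prod_abs_nodes (k i : ℕ) (hi : i < k) :
    ∏ j ∈ (Finset.range k).erase i, |(i:ℝ) - (j:ℝ)| =
      (Nat.factorial i : ℝ) * (Nat.factorial (k - 1 - i) : ℝ) := by
  have := prod_nodes_nat k i hi
  have hcast : ∀ j ∈ (Finset.range k).erase i,
      |(i:ℝ) - (j:ℝ)| = ((if j < i then i - j else j - i : ℕ) : ℝ) := by
    intro j hj
    rcases lt_or_ge j i with h | h
    · rw [if_pos h, abs_of_pos (by exact sub_pos.mpr (by exact_mod_cast h))]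
      push_cast [Nat.cast_sub h.le]; ring
    · rw [if_neg (by omega), abs_of_nonpos (by
        exact sub_nonpos.mpr (by exact_mod_cast h))]
      push_cast [Nat.cast_sub h]; ring
  rw [Finset.prod_congr rfl hcast, ← Nat.cast_prod, this, Nat.cast_mul]

/-- A real polynomial of degree at most `k-1` that is at most `δ` in absolute
value at the integers `0, …, k-1` is at most `δ·(2N)^k/(k-1)!` in absolute
value on all of `[0, N]`, for any real `N ≥ k`. -/
theorem remainder_bound_on_interval (k : ℕ) (hk : 1 ≤ k) (N : ℝ) (hN : (k : ℝ) ≤ N)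
    (δ : ℝ) (hδ : 0 ≤ δ) (r : Polynomial ℝ) (hdeg : r.natDegree ≤ k - 1)
    (hbound : ∀ i : ℕ, i < k → |r.eval (i : ℝ)| ≤ δ) :
    ∀ x : ℝ, 0 ≤ x → x ≤ N →
      |r.eval x| ≤ δ * (2 * N) ^ k / (Nat.factorial (k - 1) : ℝ) := by
  intro x hx0 hxN
  have hN0 : (0:ℝ) < N := lt_of_lt_of_le (by exact_mod_cast hk) hN
  set v : ℕ → ℝ := fun n => (n : ℝ) with hv
  have hvs : Set.InjOn v (Finset.range k : Set ℕ) := fun a _ b _ h =>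
    Nat.cast_injective h
  have hdegk : r.degree < (Finset.range k).card := by
    rw [Finset.card_range]
    calc r.degree ≤ r.natDegree := Polynomial.degree_le_natDegree
    _ < (k : WithBot ℕ) := by exact_mod_cast (by omega : r.natDegree < k)
  have hr : Lagrange.interpolate (Finset.range k) v (fun i => r.eval (v i)) = r :=
    (Lagrange.eq_interpolate hvs hdegk).symm
  have heval : r.eval x = ∑ i ∈ Finset.range k,
      r.eval (i:ℝ) * (Lagrange.basis (Finset.range k) v i).eval x := by
    conv_lhs => rw [← hr]
    rw [Lagrange.interpolate_apply, Polynomial.eval_finset_sum]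
    exact Finset.sum_congr rfl fun i _ => by rw [Polynomial.eval_mul, Polynomial.eval_C]
  -- bound each basis polynomial
  have hbasis : ∀ i ∈ Finset.range k,
      |(Lagrange.basis (Finset.range k) v i).eval x| ≤
        N ^ (k-1) / ((Nat.factorial i : ℝ) * (Nat.factorial (k - 1 - i) : ℝ)) := by
    intro i hi
    rw [Finset.mem_range] at hi
    rw [Lagrange.basis, Polynomial.eval_prod, Finset.abs_prod]
    have hcard : ((Finset.range k).erase i).card = k - 1 := by
      rw [Finset.card_erase_of_mem (Finset.mem_range.mpr hi), Finset.card_range]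
    have step : ∀ j ∈ (Finset.range k).erase i,
        |(Lagrange.basisDivisor (v i) (v j)).eval x| = |x - (j:ℝ)| / |(i:ℝ) - (j:ℝ)| := by
      intro j hj
      rw [Lagrange.basisDivisor]
      simp only [Polynomial.eval_mul, Polynomial.eval_C, Polynomial.eval_sub,
        Polynomial.eval_X, abs_mul, abs_inv]
      exact (div_eq_inv_mul _ _).symm
    rw [Finset.prod_congr rfl step, Finset.prod_div_distrib]
    rw [prod_abs_nodes k i hi]
    gcongr
    calc ∏ j ∈ (Finset.range k).erase i, |x - (j:ℝ)|
          ≤ ∏ j ∈ (Finset.range k).erase i, N := by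
            apply Finset.prod_le_prod (fun _ _ => abs_nonneg _)
            intro j hj
            rw [Finset.mem_erase, Finset.mem_range] at hj
            rw [abs_sub_le_iff]
            constructor
            · linarith [Nat.cast_nonneg (α := ℝ) j]
            · have : (j:ℝ) ≤ N := le_trans (by exact_mod_cast Nat.le_of_lt hj.2) hN
              linarith
      _ = N ^ (k-1) := by rw [Finset.prod_const, hcard]
  have hfac : ∀ i ∈ Finset.range k, (Nat.factorial i : ℝ) * (Nat.factorial (k-1-i) : ℝ) > 0 :=
    fun i _ => by positivity
  have key : |r.eval x| ≤ δ * N ^ (k-1) * ∑ i ∈ Finset.range k,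
      1 / ((Nat.factorial i : ℝ) * (Nat.factorial (k - 1 - i) : ℝ)) := by
    rw [heval, Finset.mul_sum]
    refine le_trans (Finset.abs_sum_le_sum_abs _ _) (Finset.sum_le_sum ?_)
    intro i hi
    rw [abs_mul]
    have h1 := hbound i (Finset.mem_range.mp hi)
    have h2 := hbasis i hi
    calc |r.eval (i:ℝ)| * |(Lagrange.basis (Finset.range k) v i).eval x|
        ≤ δ * (N ^ (k-1) / ((Nat.factorial i : ℝ) * (Nat.factorial (k-1-i) : ℝ))) := by
          exact mul_le_mul h1 h2 (abs_nonneg _) hδ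
      _ = δ * N ^ (k-1) * (1 / ((Nat.factorial i : ℝ) * (Nat.factorial (k-1-i) : ℝ))) := by
          ring
  -- sum of reciprocals equals 2^(k-1)/(k-1)!
  have hsum : ∑ i ∈ Finset.range k,
      1 / ((Nat.factorial i : ℝ) * (Nat.factorial (k - 1 - i) : ℝ))
      = 2 ^ (k-1) / (Nat.factorial (k-1) : ℝ) := by
    obtain ⟨n, rfl⟩ : ∃ n, k = n + 1 := ⟨k - 1, by omega⟩
    simp only [Nat.add_sub_cancel]
    have : ∀ i ∈ Finset.range (n+1),
        1 / ((Nat.factorial i : ℝ) * (Nat.factorial (n - i) : ℝ))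
        = (n.choose i : ℝ) / (Nat.factorial n : ℝ) := by
      intro i hi
      rw [Finset.mem_range] at hi
      have h := Nat.choose_mul_factorial_mul_factorial (Nat.lt_succ_iff.mp hi)
      have : (n.choose i : ℝ) * (Nat.factorial i : ℝ) * (Nat.factorial (n-i) : ℝ)
          = (Nat.factorial n : ℝ) := by exact_mod_cast congrArg Nat.cast h
      field_simp
      linarith [this]
    rw [Finset.sum_congr rfl this, ← Finset.sum_div, ← Nat.cast_sum]
    rw [Nat.sum_range_choose]
    push_cast
    ring
  have final : δ * N ^ (k-1) * (2 ^ (k-1) / (Nat.factorial (k-1) : ℝ))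
      ≤ δ * (2 * N) ^ k / (Nat.factorial (k - 1) : ℝ) := by
    rw [mul_pow]
    have h1 : (2:ℝ) ^ (k-1) ≤ 2 ^ k := by
      apply pow_le_pow_right₀ (by norm_num) (by omega)
    have h2 : N ^ (k-1) ≤ N ^ k := by
      apply pow_le_pow_right₀ (le_trans (by exact_mod_cast hk) hN) (by omega)
    have hfp : (0:ℝ) < (Nat.factorial (k-1) : ℝ) := by positivity
    rw [div_eq_mul_inv, div_eq_mul_inv]
    have : δ * N ^ (k-1) * 2 ^ (k-1) ≤ δ * (2 ^ k * N ^ k) := by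
      calc δ * N ^ (k-1) * 2 ^ (k-1) = δ * (2 ^ (k-1) * N ^ (k-1)) := by ring
        _ ≤ δ * (2 ^ k * N ^ k) := by
          apply mul_le_mul_of_nonneg_left _ hδ
          apply mul_le_mul h1 h2 (by positivity) (by positivity)
    calc δ * N ^ (k-1) * (2 ^ (k-1) * (Nat.factorial (k-1) : ℝ)⁻¹)
        = δ * N ^ (k-1) * 2 ^ (k-1) * (Nat.factorial (k-1) : ℝ)⁻¹ := by ring
      _ ≤ δ * (2 ^ k * N ^ k) * (Nat.factorial (k-1) : ℝ)⁻¹ := by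
          exact mul_le_mul_of_nonneg_right this (by positivity)
  rw [hsum] at key
  exact le_trans key final
end

section
/- Let k, N, D be integers with 1 ≤ k ≤ D, let δ ≥ 0 be real, and let p be a real polynomial of degree at most D with −δ ≤ p(i) ≤ 1 + δ for every integer i ∈ {0, …, N} and |p(i)| ≤ δ for every integer i ∈ {0, …, k−1}. Write p(x) = q(x)·∏_{j=0}^{k−1}(x − j) + r(x), where q and r are the quotient and remainder of dividing p by ∏_{j=0}^{k−1}(x − j), so that deg r ≤ k − 1. Then for every integer i ∈ {k, …, N}: |q(i)| ≤ ((i−k)!/i!) · (1 + δ + δ·(2N)^k/(k−1)!). -/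
open Polynomial Finset

lemma aux_prod_abs (k j : ℕ) (hj : j < k) :
    ∏ m ∈ (range k).erase j, |(j:ℝ) - (m:ℝ)|
      = ((Nat.factorial j * Nat.factorial (k - 1 - j) : ℕ) : ℝ) := by
  have hsplit : (range k).erase j = range j ∪ Ico (j+1) k := by
    ext m; simp only [mem_erase, mem_range, mem_union, mem_Ico]; omega
  have hdisj : Disjoint (range j) (Ico (j+1) k) := by
    simp only [Finset.disjoint_left, mem_range, mem_Ico]; omega
  rw [hsplit, Finset.prod_union hdisj, Nat.cast_mul]
  have h1 : ∏ m ∈ range j, |(j:ℝ) - (m:ℝ)| = (Nat.factorial j : ℝ) := by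
    have : (Nat.factorial j : ℝ) = ((∏ m ∈ range j, (j - m) : ℕ) : ℝ) := by
      rw [← Nat.descFactorial_eq_prod_range, Nat.descFactorial_self]
    rw [this, Nat.cast_prod]
    refine Finset.prod_congr rfl fun m hm => ?_
    simp only [mem_range] at hm
    rw [Nat.cast_sub hm.le, abs_of_nonneg]
    have : (m:ℝ) ≤ (j:ℝ) := by exact_mod_cast hm.le
    linarith
  have h2 : ∏ m ∈ Ico (j+1) k, |(j:ℝ) - (m:ℝ)| = (Nat.factorial (k - 1 - j) : ℝ) := by
    have : (Nat.factorial (k-1-j) : ℝ) = ((∏ m ∈ Ico (j+1) k, (m - j) : ℕ) : ℝ) := by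
      rw [Finset.prod_Ico_eq_prod_range]
      congr 1
      rw [← Finset.prod_range_add_one_eq_factorial (k-1-j)]
      have : k - (j+1) = k - 1 - j := by omega
      rw [this]
      exact (Finset.prod_congr rfl fun m _ => by omega).symm
    rw [this, Nat.cast_prod]
    refine Finset.prod_congr rfl fun m hm => ?_
    simp only [mem_Ico] at hm
    rw [Nat.cast_sub (by omega), abs_sub_comm, abs_of_nonneg]
    have : (j:ℝ) ≤ (m:ℝ) := by exact_mod_cast (by omega : j ≤ m)
    linarith
  rw [h1, h2]

lemma aux_basis_bound (k N i j : ℕ) (hj : j < k) (hki : k ≤ i) (hiN : i ≤ N) :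
    |Polynomial.eval (i:ℝ) (Lagrange.basis (range k) (fun n : ℕ => (n:ℝ)) j)|
      ≤ (N:ℝ)^(k-1) / ((Nat.factorial j : ℝ) * (Nat.factorial (k-1-j) : ℝ)) := by
  rw [Lagrange.basis, Polynomial.eval_prod, Finset.abs_prod]
  have heq : ∀ m ∈ (range k).erase j,
      |Polynomial.eval (i:ℝ) (Lagrange.basisDivisor (j:ℝ) (m:ℝ))|
        = |(i:ℝ) - m| / |(j:ℝ) - m| := by
    intro m hm
    rw [Lagrange.basisDivisor]
    simp only [Polynomial.eval_mul, Polynomial.eval_C, Polynomial.eval_sub, Polynomial.eval_X]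
    rw [abs_mul, abs_inv, div_eq_inv_mul]
  rw [Finset.prod_congr rfl heq, Finset.prod_div_distrib]
  have hnum : ∏ m ∈ (range k).erase j, |(i:ℝ) - m| ≤ (N:ℝ)^(k-1) := by
    have := Finset.prod_le_prod (f := fun m : ℕ => |(i:ℝ) - m|) (g := fun _ => (N:ℝ))
      (s := (range k).erase j) (fun m _ => abs_nonneg _) ?_
    · rw [Finset.prod_const, Finset.card_erase_of_mem (mem_range.mpr hj),
        Finset.card_range] at this
      exact this
    · intro m hm
      have hm' : m < k := mem_range.mp (Finset.mem_of_mem_erase hm)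
      show |(i:ℝ) - m| ≤ (N:ℝ); rw [abs_of_nonneg]
      · have h1 : (i:ℝ) ≤ N := by exact_mod_cast hiN
        have h2 : (0:ℝ) ≤ m := Nat.cast_nonneg m
        linarith
      · have : (m:ℝ) ≤ i := by exact_mod_cast (by omega : m ≤ i)
        linarith
  rw [aux_prod_abs k j hj]
  have hden : (0:ℝ) < ((Nat.factorial j * Nat.factorial (k-1-j) : ℕ) : ℝ) := by
    positivity
  calc (∏ m ∈ (range k).erase j, |(i:ℝ) - m|) / ((Nat.factorial j * Nat.factorial (k-1-j) : ℕ) : ℝ)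
      ≤ (N:ℝ)^(k-1) / ((Nat.factorial j * Nat.factorial (k-1-j) : ℕ) : ℝ) := by
        gcongr
    _ = (N:ℝ)^(k-1) / ((Nat.factorial j : ℝ) * (Nat.factorial (k-1-j) : ℝ)) := by push_cast; ring

lemma aux_sum (k : ℕ) (hk : 1 ≤ k) :
    ∑ j ∈ range k, (1:ℝ)/((Nat.factorial j:ℝ) * (Nat.factorial (k-1-j):ℝ))
      = 2^(k-1) / (Nat.factorial (k-1):ℝ) := by
  obtain ⟨n, rfl⟩ : ∃ n, k = n + 1 := ⟨k-1, by omega⟩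
  simp only [Nat.add_sub_cancel]
  have key : ∀ j ∈ range (n+1), (1:ℝ)/((Nat.factorial j:ℝ) * (Nat.factorial (n-j):ℝ))
      = (n.choose j : ℝ)/(Nat.factorial n : ℝ) := by
    intro j hj
    have hjn : j ≤ n := Nat.lt_succ_iff.mp (mem_range.mp hj)
    have h := Nat.choose_mul_factorial_mul_factorial hjn
    rw [div_eq_div_iff (by positivity) (by positivity)]
    push_cast [← h]
    ring
  rw [Finset.sum_congr rfl key, ← Finset.sum_div, ← Nat.cast_sum, Nat.sum_range_choose]
  push_cast
  ring

lemma aux_rem (k N : ℕ) (hk : 1 ≤ k) (δ : ℝ) (hδ : 0 ≤ δ) (p : Polynomial ℝ)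
    (hsmall : ∀ j : ℕ, j < k → |p.eval (j:ℝ)| ≤ δ) (i : ℕ) (hki : k ≤ i) (hiN : i ≤ N) :
    |(p %ₘ ∏ j ∈ range k, (X - C (j:ℝ))).eval (i:ℝ)|
      ≤ δ * ((N:ℝ)^(k-1) * 2^(k-1) / (Nat.factorial (k-1):ℝ)) := by
  set Q : Polynomial ℝ := ∏ j ∈ range k, (X - C (j:ℝ)) with hQ
  have hQmonic : Q.Monic := monic_prod_of_monic _ _ fun j _ => monic_X_sub_C _
  have hQdeg : Q.degree = (k : ℕ) := by
    rw [hQ, degree_prod]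
    simp only [degree_X_sub_C, Finset.sum_const, card_range, nsmul_eq_mul, mul_one]
  have hr := degree_modByMonic_lt p hQmonic
  rw [hQdeg] at hr
  -- remainder agrees with p at nodes
  have hnode : ∀ j ∈ range k, (p %ₘ Q).eval (j:ℝ) = p.eval (j:ℝ) := by
    intro j hj
    have := Polynomial.modByMonic_add_div p Q
    have hQj : Q.eval (j:ℝ) = 0 := by
      rw [hQ, eval_prod]
      exact Finset.prod_eq_zero hj (by simp)
    have heval := congrArg (Polynomial.eval (j:ℝ)) this
    simp only [eval_add, eval_mul, hQj, zero_mul, add_zero] at heval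
    exact heval
  have hinj : Set.InjOn (fun n : ℕ => (n:ℝ)) (range k) :=
    fun a _ b _ h => Nat.cast_injective h
  have hinterp : p %ₘ Q = Lagrange.interpolate (range k) (fun n : ℕ => (n:ℝ))
      (fun j => p.eval (j:ℝ)) := by
    apply Lagrange.eq_interpolate_of_eval_eq _ hinj
    · rwa [Finset.card_range]
    · exact hnode
  rw [hinterp, Lagrange.interpolate_apply, eval_finset_sum]
  calc |∑ j ∈ range k, Polynomial.eval (i:ℝ)
          (C (p.eval (j:ℝ)) * Lagrange.basis (range k) (fun n : ℕ => (n:ℝ)) j)|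
      ≤ ∑ j ∈ range k, |Polynomial.eval (i:ℝ)
          (C (p.eval (j:ℝ)) * Lagrange.basis (range k) (fun n : ℕ => (n:ℝ)) j)| :=
        Finset.abs_sum_le_sum_abs _ _
    _ ≤ ∑ j ∈ range k, δ * ((N:ℝ)^(k-1) / ((Nat.factorial j : ℝ) * (Nat.factorial (k-1-j) : ℝ))) := by
        apply Finset.sum_le_sum
        intro j hj
        rw [eval_mul, eval_C, abs_mul]
        exact mul_le_mul (hsmall j (mem_range.mp hj))
          (aux_basis_bound k N i j (mem_range.mp hj) hki hiN) (abs_nonneg _) hδ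
    _ = δ * ((N:ℝ)^(k-1) * 2^(k-1) / (Nat.factorial (k-1):ℝ)) := by
        rw [← Finset.mul_sum]
        congr 1
        have : ∀ j ∈ range k, (N:ℝ)^(k-1) / ((Nat.factorial j : ℝ) * (Nat.factorial (k-1-j) : ℝ))
            = (N:ℝ)^(k-1) * ((1:ℝ)/((Nat.factorial j:ℝ) * (Nat.factorial (k-1-j):ℝ))) := by
          intro j _; ring
        rw [Finset.sum_congr rfl this, ← Finset.mul_sum, aux_sum k hk]
        ring

/-- Bound on the quotient `q = p /ₘ ∏_{j=0}^{k-1}(X - j)` at the integers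
`k, …, N`, for a polynomial `p` with `-δ ≤ p(i) ≤ 1 + δ` at all integers
`0, …, N` and `|p(i)| ≤ δ` at `0, …, k-1`. -/
theorem quotient_upper_bound (k N D : ℕ) (hk : 1 ≤ k) (hkD : k ≤ D)
    (δ : ℝ) (hδ : 0 ≤ δ) (p : Polynomial ℝ) (hdeg : p.natDegree ≤ D)
    (hbound : ∀ i : ℕ, i ≤ N → -δ ≤ p.eval (i : ℝ) ∧ p.eval (i : ℝ) ≤ 1 + δ)
    (hsmall : ∀ i : ℕ, i < k → |p.eval (i : ℝ)| ≤ δ) :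
    ∀ i : ℕ, k ≤ i → i ≤ N →
      |(p /ₘ (∏ j ∈ Finset.range k, (X - C (j : ℝ)))).eval (i : ℝ)|
        ≤ ((Nat.factorial (i - k) : ℝ) / (Nat.factorial i : ℝ)) *
            (1 + δ + δ * (2 * (N : ℝ)) ^ k / (Nat.factorial (k - 1) : ℝ)) := by
  intro i hki hiN
  set Q : Polynomial ℝ := ∏ j ∈ Finset.range k, (X - C (j:ℝ)) with hQ
  have hQmonic : Q.Monic := monic_prod_of_monic _ _ fun j _ => monic_X_sub_C _
  have hQeval : Q.eval (i:ℝ) = ((Nat.descFactorial i k : ℕ) : ℝ) := by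
    rw [hQ, eval_prod, Nat.descFactorial_eq_prod_range, Nat.cast_prod]
    refine Finset.prod_congr rfl fun j hj => ?_
    have hji : j ≤ i := le_trans (mem_range.mp hj).le hki
    rw [Nat.cast_sub hji]
    simp
  have hdpos : (0:ℝ) < ((Nat.descFactorial i k : ℕ) : ℝ) := by
    have : 0 < Nat.descFactorial i k := by
      rw [Nat.descFactorial_eq_prod_range]
      exact Finset.prod_pos fun j hj => by have := Finset.mem_range.mp hj; omega
    exact_mod_cast this
  have hQne : Q.eval (i:ℝ) ≠ 0 := by rw [hQeval]; exact ne_of_gt hdpos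
  have hfact : (Nat.factorial (i-k)) * Nat.descFactorial i k = Nat.factorial i :=
    Nat.factorial_mul_descFactorial hki
  have hq : (p /ₘ Q).eval (i:ℝ) = (p.eval (i:ℝ) - (p %ₘ Q).eval (i:ℝ)) / Q.eval (i:ℝ) := by
    have h := congrArg (Polynomial.eval (i:ℝ)) (Polynomial.modByMonic_add_div p Q)
    simp only [eval_add, eval_mul] at h
    rw [eq_div_iff hQne]
    linear_combination h
  have hp' : |p.eval (i:ℝ)| ≤ 1 + δ := by
    obtain ⟨h1, h2⟩ := hbound i hiN
    rw [abs_le]; constructor <;> linarith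
  have hN1 : (1:ℝ) ≤ N := by exact_mod_cast le_trans hk (le_trans hki hiN)
  have hr' : |(p %ₘ Q).eval (i:ℝ)| ≤ δ * (2*(N:ℝ))^k / (Nat.factorial (k-1):ℝ) := by
    refine (aux_rem k N hk δ hδ p hsmall i hki hiN).trans ?_
    have h1 : (N:ℝ)^(k-1) * 2^(k-1) = (2*(N:ℝ))^(k-1) := by rw [mul_pow]; ring
    have h2 : (2*(N:ℝ))^(k-1) ≤ (2*(N:ℝ))^k :=
      pow_le_pow_right₀ (by linarith) (by omega)
    rw [h1, mul_div_assoc]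
    gcongr
  have key : |(p /ₘ Q).eval (i:ℝ)|
      ≤ (1 + δ + δ * (2*(N:ℝ))^k / (Nat.factorial (k-1):ℝ)) / ((Nat.descFactorial i k : ℕ) : ℝ) := by
    rw [hq, abs_div, hQeval, abs_of_pos hdpos]
    gcongr
    calc |p.eval (i:ℝ) - (p %ₘ Q).eval (i:ℝ)|
        ≤ |p.eval (i:ℝ)| + |(p %ₘ Q).eval (i:ℝ)| := abs_sub _ _
      _ ≤ (1 + δ) + δ * (2*(N:ℝ))^k / (Nat.factorial (k-1):ℝ) := add_le_add hp' hr'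
      _ = 1 + δ + δ * (2*(N:ℝ))^k / (Nat.factorial (k-1):ℝ) := by ring
  refine key.trans_eq ?_
  have hcast : ((Nat.factorial (i-k)):ℝ) * ((Nat.descFactorial i k : ℕ) : ℝ)
      = ((Nat.factorial i):ℝ) := by exact_mod_cast hfact
  have hfi : (0:ℝ) < (Nat.factorial i : ℝ) := by positivity
  have hdiv : ((Nat.factorial (i-k)):ℝ)/((Nat.factorial i):ℝ)
      = 1/((Nat.descFactorial i k : ℕ) : ℝ) := by
    rw [div_eq_div_iff hfi.ne' hdpos.ne']
    linear_combination hcast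
  rw [hdiv]
  ring
end

section
/- Let k ≥ 1 be an integer, let δ ≥ 0 and σ be reals, and let p be a real polynomial with |p(i)| ≤ δ for every integer i ∈ {0, …, k−1} and p(k) = σ. Write p(x) = q(x)·∏_{j=0}^{k−1}(x − j) + r(x), where q and r are the quotient and remainder of dividing p by ∏_{j=0}^{k−1}(x − j), so that deg r ≤ k − 1. Then |q(k)| ≥ (σ − δ·k·2^{k−1})/k!. -/
open Polynomial

lemma comp_sub_degree_lt (r : Polynomial ℝ) (k : ℕ) (h : r.degree < (k : ℕ) + 1) :
    (r.comp (X + C 1) - r).degree < (k : ℕ) := by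
  have hXC : (X + C (1 : ℝ)).natDegree = 1 := natDegree_X_add_C 1
  by_cases hd : r.natDegree = 0
  · obtain ⟨a, rfl⟩ := natDegree_eq_zero.mp hd
    rw [C_comp, sub_self, degree_zero]
    exact WithBot.bot_lt_coe _
  have hr0 : r ≠ 0 := fun hr => hd (by simp [hr])
  have hcomp0 : r.comp (X + C 1) ≠ 0 := fun hc => by
    have h2 := natDegree_comp (p := r) (q := X + C (1 : ℝ))
    rw [hc, hXC, mul_one, natDegree_zero] at h2
    exact hd h2.symm
  have hdeg : (r.comp (X + C 1)).degree = r.degree := by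
    rw [degree_eq_natDegree hr0, degree_eq_natDegree hcomp0, natDegree_comp, hXC, mul_one]
  have hlc : (r.comp (X + C 1)).leadingCoeff = r.leadingCoeff := by
    rw [leadingCoeff_comp (by rw [hXC]; norm_num),
      (monic_X_add_C (1 : ℝ)).leadingCoeff, one_pow, mul_one]
  have hsub := degree_sub_lt hdeg hcomp0 hlc
  rw [hdeg] at hsub
  refine lt_of_lt_of_le hsub ?_
  rw [degree_eq_natDegree hr0]
  exact_mod_cast Nat.le_of_lt_succ ((natDegree_lt_iff_degree_lt hr0).mpr (by exact_mod_cast h))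

lemma fwdDiff_iter_poly_eq_zero : ∀ (k : ℕ) (r : Polynomial ℝ), r.degree < (k : ℕ) →
    (fwdDiff (1 : ℝ))^[k] (fun x => r.eval x) = fun _ => 0 := by
  intro k
  induction k with
  | zero =>
      intro r hr
      have hb : r.degree = ⊥ := Nat.WithBot.lt_zero_iff.mp (by exact_mod_cast hr)
      simp [degree_eq_bot.mp hb]
  | succ n ih =>
      intro r hr
      have step : fwdDiff (1 : ℝ) (fun x => r.eval x) = fun x => (r.comp (X + C 1) - r).eval x := by
        funext x
        simp [fwdDiff, eval_comp, add_comm]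
      rw [Function.iterate_succ_apply, step, ih _ (comp_sub_degree_lt r n (by exact_mod_cast hr))]

/-- Lower bound on the quotient `q = p /ₘ ∏_{j=0}^{k-1}(X - j)` at `k`, for a
polynomial `p` with `|p(i)| ≤ δ` at the integers `0, …, k-1` and `p(k) = σ`. -/
theorem quotient_lower_bound_at_k (k : ℕ) (hk : 1 ≤ k) (δ σ : ℝ) (hδ : 0 ≤ δ)
    (p : Polynomial ℝ)
    (hsmall : ∀ i : ℕ, i < k → |p.eval (i : ℝ)| ≤ δ)
    (hσ : p.eval (k : ℝ) = σ) :
    |(p /ₘ (∏ j ∈ Finset.range k, (X - C (j : ℝ)))).eval (k : ℝ)|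
      ≥ (σ - δ * k * 2 ^ (k - 1)) / (Nat.factorial k : ℝ) := by
  set M : Polynomial ℝ := ∏ j ∈ Finset.range k, (X - C (j : ℝ)) with hM
  have hMmonic : M.Monic := monic_prod_of_monic _ _ (fun j _ => monic_X_sub_C _)
  set r : Polynomial ℝ := p %ₘ M with hr
  set q : Polynomial ℝ := p /ₘ M with hq
  have hpeq : r + M * q = p := modByMonic_add_div p M
  -- r agrees with p at 0, ..., k-1
  have hre : ∀ i : ℕ, i < k → r.eval (i : ℝ) = p.eval (i : ℝ) := by
    intro i hi
    have hMz : M.eval (i : ℝ) = 0 := by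
      rw [hM, eval_prod]
      exact Finset.prod_eq_zero (Finset.mem_range.mpr hi) (by simp)
    have := congrArg (fun s => Polynomial.eval (i : ℝ) s) hpeq
    simpa [hMz] using this
  -- degree r < k
  have hrdeg : r.degree < (k : ℕ) := by
    have h1 := degree_modByMonic_lt p hMmonic
    have hMdeg : M.degree = (k : ℕ) := by
      rw [hM, degree_prod]
      simp only [degree_X_sub_C]
      rw [Finset.sum_const, Finset.card_range]
      simp
    rwa [hMdeg] at h1
  -- M.eval k = k!
  have hMk : M.eval (k : ℝ) = (Nat.factorial k : ℝ) := by
    rw [hM, eval_prod]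
    have h1 : ∀ j ∈ Finset.range k, ((X : Polynomial ℝ) - C (j : ℝ)).eval (k : ℝ)
        = ((k - j : ℕ) : ℝ) := by
      intro j hj
      have hj' := Finset.mem_range.mp hj
      simp [Nat.cast_sub hj'.le]
    rw [Finset.prod_congr rfl h1, ← Nat.cast_prod]
    congr 1
    rw [← Finset.prod_range_reflect]
    have h2 : ∀ j ∈ Finset.range k, k - (k - 1 - j) = j + 1 := by
      intro j hj
      have hj' := Finset.mem_range.mp hj
      omega
    rw [Finset.prod_congr rfl h2, Finset.prod_range_add_one_eq_factorial]
  -- finite-difference identity at k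
  have hfd : (0 : ℝ) = ∑ i ∈ Finset.range (k + 1),
      ((-1 : ℤ) ^ (k - i) * (k.choose i : ℤ)) • r.eval ((0 : ℝ) + i • (1 : ℝ)) := by
    have h1 := fwdDiff_iter_eq_sum_shift (1 : ℝ) (fun x => r.eval x) k 0
    rw [fwdDiff_iter_poly_eq_zero k r hrdeg] at h1
    exact h1
  have hsum : (0 : ℝ) = ∑ i ∈ Finset.range (k + 1),
      ((-1 : ℝ) ^ (k - i) * (k.choose i : ℝ)) * r.eval (i : ℝ) := by
    rw [hfd]
    refine Finset.sum_congr rfl (fun i hi => ?_)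
    rw [zsmul_eq_mul]
    push_cast
    ring_nf
  rw [Finset.sum_range_succ] at hsum
  simp only [Nat.sub_self, pow_zero, Nat.choose_self, Nat.cast_one, one_mul] at hsum
  have hrk : r.eval (k : ℝ) = -∑ i ∈ Finset.range k,
      ((-1 : ℝ) ^ (k - i) * (k.choose i : ℝ)) * r.eval (i : ℝ) := by linarith
  -- bound |r(k)|
  have hrkbound : |r.eval (k : ℝ)| ≤ δ * k * 2 ^ (k - 1) := by
    rw [hrk, abs_neg]
    calc |∑ i ∈ Finset.range k, ((-1 : ℝ) ^ (k - i) * (k.choose i : ℝ)) * r.eval (i : ℝ)|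
        ≤ ∑ i ∈ Finset.range k, |((-1 : ℝ) ^ (k - i) * (k.choose i : ℝ)) * r.eval (i : ℝ)| :=
          Finset.abs_sum_le_sum_abs _ _
      _ ≤ ∑ i ∈ Finset.range k, (k.choose i : ℝ) * δ := by
          refine Finset.sum_le_sum (fun i hi => ?_)
          rw [abs_mul, abs_mul, abs_pow, abs_neg, abs_one, one_pow, one_mul,
            abs_of_nonneg (by positivity : (0:ℝ) ≤ (k.choose i : ℝ))]
          exact mul_le_mul_of_nonneg_left
            (by rw [hre i (Finset.mem_range.mp hi)]; exact hsmall i (Finset.mem_range.mp hi))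
            (by positivity)
      _ = ((∑ i ∈ Finset.range k, k.choose i : ℕ) : ℝ) * δ := by
          push_cast; rw [Finset.sum_mul]
      _ ≤ δ * k * 2 ^ (k - 1) := by
          have hle : (∑ i ∈ Finset.range k, k.choose i) ≤ k * 2 ^ (k - 1) := by
            have h1 := Nat.sum_range_choose k
            rw [Finset.sum_range_succ, Nat.choose_self] at h1
            rcases Nat.lt_or_ge k 2 with h | h
            · interval_cases k
              norm_num [Finset.sum_range_succ]
            · have h2 : 2 ^ k = 2 * 2 ^ (k - 1) := by
                rw [← pow_succ']
                congr 1
                omega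
              have h3 : 2 * 2 ^ (k - 1) ≤ k * 2 ^ (k - 1) := Nat.mul_le_mul_right _ h
              omega
          calc ((∑ i ∈ Finset.range k, k.choose i : ℕ) : ℝ) * δ
              ≤ ((k * 2 ^ (k - 1) : ℕ) : ℝ) * δ :=
                mul_le_mul_of_nonneg_right (by exact_mod_cast hle) hδ
            _ = δ * k * 2 ^ (k - 1) := by push_cast; ring
  -- conclude
  have hσeq : σ = r.eval (k : ℝ) + (Nat.factorial k : ℝ) * q.eval (k : ℝ) := by
    have h1 := congrArg (fun s => Polynomial.eval (k : ℝ) s) hpeq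
    simp only [eval_add, eval_mul, hMk, hσ] at h1
    linarith
  have hfacpos : (0 : ℝ) < (Nat.factorial k : ℝ) := by
    exact_mod_cast Nat.factorial_pos k
  rw [ge_iff_le, div_le_iff₀ hfacpos]
  have h1 : σ - δ * k * 2 ^ (k - 1) ≤ (Nat.factorial k : ℝ) * q.eval (k : ℝ) := by
    have h2 : (Nat.factorial k : ℝ) * q.eval (k : ℝ) = σ - r.eval (k : ℝ) := by linarith
    rw [h2]
    have h3 := abs_le.mp hrkbound
    linarith [h3.1, h3.2]
  calc σ - δ * k * 2 ^ (k - 1) ≤ (Nat.factorial k : ℝ) * q.eval (k : ℝ) := h1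
    _ ≤ |(Nat.factorial k : ℝ) * q.eval (k : ℝ)| := le_abs_self _
    _ = |q.eval (k : ℝ)| * (Nat.factorial k : ℝ) := by
        rw [abs_mul, abs_of_pos hfacpos, mul_comm]
end
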